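/- Let E be a finite effect algebra with a unique atom p. Then every element of E equals kp for a unique k ∈ {0, 1, …, ord(p)}, so E is the finite chain {0, p, 2p, …, ord(p)·p = 1}. -/
import Mathlib


/-- An effect algebra `(E, 0, 1, ⊕)`, with the partial operation `⊕` encoded by a
definedness predicate `perp` together with a total function `add` whose value is only
meaningful on `perp` pairs. -/
structure EffectAlgebra (α : Type*) where
  /-- `perp a b` means `a ⊕ b` is defined. -/
  perp : α → α → Prop
  /-- the orthogonal sum (meaningful when `perp a b`). -/
  add : α → α → α
  zero : α
  one : α
  /-- commutativity -/
  perp_comm : ∀ a b, perp a b → perp b a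
  add_comm : ∀ a b, perp a b → add a b = add b a
  /-- associativity -/
  perp_left : ∀ a b c, perp b c → perp a (add b c) → perp a b
  perp_assoc : ∀ a b c, perp b c → perp a (add b c) → perp (add a b) c
  add_assoc : ∀ a b c, perp b c → perp a (add b c) →
    add (add a b) c = add a (add b c)
  /-- unique orthosupplement -/
  orthosupp : ∀ a, ∃! b, perp a b ∧ add a b = one
  /-- zero-one law -/
  zero_one : ∀ a, perp a one → a = zero
  /-- `zero` is the orthosupplement of `one` -/
  perp_zero_one : perp zero one
  add_zero_one : add zero one = one

namespace EffectAlgebra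

variable {α : Type*} (E : EffectAlgebra α)

/-- A map `L` is additive: if `b ⊥ c` then `L b ⊥ L c` and `L (b ⊕ c) = L b ⊕ L c`. -/
def Additive (L : α → α) : Prop :=
  ∀ b c, E.perp b c → E.perp (L b) (L c) ∧ L (E.add b c) = E.add (L b) (L c)

/-- (S1): every left translation is additive. -/
def S1 (op : α → α → α) : Prop := ∀ a, E.Additive (op a)

/-- (S2): `1 ∘ a = a`. -/
def S2 (op : α → α → α) : Prop := ∀ a, op E.one a = a

/-- (S3): `a ∘ b = 0` implies `b ∘ a = 0`. -/
def S3 (op : α → α → α) : Prop := ∀ a b, op a b = E.zero → op b a = E.zero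

/-- `b'` is the orthosupplement of `b`. -/
def IsOrthosupp (b b' : α) : Prop := E.perp b b' ∧ E.add b b' = E.one

/-- (S4): if `a ∘ b = b ∘ a` then `a ∘ b' = b' ∘ a` and `a ∘ (b ∘ c) = (a ∘ b) ∘ c`. -/
def S4 (op : α → α → α) : Prop :=
  ∀ a b, op a b = op b a →
    (∀ b', E.IsOrthosupp b b' → op a b' = op b' a) ∧
    (∀ c, op a (op b c) = op (op a b) c)

/-- the induced order: `a ≤ b` iff `a ⊕ c = b` for some `c`. -/
def le (a b : α) : Prop := ∃ c, E.perp a c ∧ E.add a c = b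

/-- an atom: a minimal nonzero element. -/
def IsAtom' (p : α) : Prop :=
  p ≠ E.zero ∧ ∀ x, E.le x p → x = E.zero ∨ x = p

end EffectAlgebra
/-- `NSum E a n s` : `s` is the `n`-fold orthogonal sum `a ⊕ ⋯ ⊕ a`. -/
inductive NSum {α : Type*} (E : EffectAlgebra α) (a : α) : ℕ → α → Prop
  | zero : NSum E a 0 E.zero
  | succ : ∀ {n s}, NSum E a n s → E.perp s a → NSum E a (n + 1) (E.add s a)
section Aux

namespace EffectAlgebra

variable {α : Type*} (E : EffectAlgebra α)

theorem rassoc {a b c : α} (hab : E.perp a b) (h : E.perp (E.add a b) c) :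
    E.perp b c ∧ E.perp a (E.add b c) ∧ E.add (E.add a b) c = E.add a (E.add b c) := by
  have hba := E.perp_comm _ _ hab
  have h1 : E.perp c (E.add b a) := by
    rw [← E.add_comm a b hab]; exact E.perp_comm _ _ h
  have hcb : E.perp c b := E.perp_left c b a hba h1
  have h2 : E.perp (E.add c b) a := E.perp_assoc c b a hba h1
  have hbc := E.perp_comm _ _ hcb
  have h3 : E.perp a (E.add b c) := by
    rw [← E.add_comm c b hcb]; exact E.perp_comm _ _ h2
  exact ⟨hbc, h3, E.add_assoc a b c hbc h3⟩

theorem orthosupp_unique {a b c : α} (hb : E.IsOrthosupp a b) (hc : E.IsOrthosupp a c) :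
    b = c := by
  obtain ⟨d, _, hu⟩ := E.orthosupp a
  rw [hu b hb, hu c hc]

theorem isOrthosupp_symm {a b : α} (h : E.IsOrthosupp a b) : E.IsOrthosupp b a :=
  ⟨E.perp_comm _ _ h.1, by rw [← E.add_comm a b h.1]; exact h.2⟩

theorem orthosupp_inj {a b c : α} (ha : E.IsOrthosupp a c) (hb : E.IsOrthosupp b c) :
    a = b :=
  E.orthosupp_unique (E.isOrthosupp_symm ha) (E.isOrthosupp_symm hb)

theorem exists_orthosupp (a : α) : ∃ b, E.IsOrthosupp a b := (E.orthosupp a).exists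

theorem zero_add (a : α) : E.perp E.zero a ∧ E.add E.zero a = a := by
  obtain ⟨a', ha'⟩ := E.exists_orthosupp a
  have h01 : E.perp E.zero (E.add a a') := ha'.2 ▸ E.perp_zero_one
  have h0a : E.perp E.zero a := E.perp_left _ _ _ ha'.1 h01
  have hpa : E.perp (E.add E.zero a) a' := E.perp_assoc _ _ _ ha'.1 h01
  have heq : E.add (E.add E.zero a) a' = E.one := by
    rw [E.add_assoc _ _ _ ha'.1 h01, ha'.2, E.add_zero_one]
  exact ⟨h0a, E.orthosupp_inj ⟨hpa, heq⟩ ha'⟩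

theorem perp_zero (a : α) : E.perp a E.zero := E.perp_comm _ _ (E.zero_add a).1

theorem add_zero (a : α) : E.add a E.zero = a := by
  rw [E.add_comm _ _ (E.perp_zero a)]; exact (E.zero_add a).2

theorem cancel {a b c : α} (hab : E.perp a b) (hac : E.perp a c)
    (h : E.add a b = E.add a c) : b = c := by
  obtain ⟨s', hs'⟩ := E.exists_orthosupp (E.add a b)
  -- b ⊕ (a ⊕ s') = 1 via commuting:  (b ⊕ a) ⊕ s' = 1
  have hb : E.IsOrthosupp b (E.add a s') := by
    have hba := E.perp_comm _ _ hab
    have h1 : E.perp (E.add b a) s' := by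
      rw [← E.add_comm a b hab]; exact hs'.1
    obtain ⟨has', hb1, he⟩ := E.rassoc hba h1
    refine ⟨hb1, ?_⟩
    rw [← he, E.add_comm b a hba, hs'.2]
  have hc : E.IsOrthosupp c (E.add a s') := by
    have hs'c : E.IsOrthosupp (E.add a c) s' := h ▸ hs'
    have hca := E.perp_comm _ _ hac
    have h1 : E.perp (E.add c a) s' := by
      rw [← E.add_comm a c hac]; exact hs'c.1
    obtain ⟨has', hc1, he⟩ := E.rassoc hca h1
    refine ⟨hc1, ?_⟩
    rw [← he, E.add_comm c a hca, hs'c.2]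
  exact E.orthosupp_inj hb hc

theorem pos {a b : α} (hab : E.perp a b) (h : E.add a b = E.zero) :
    a = E.zero ∧ b = E.zero := by
  have h1 : E.perp (E.add a b) E.one := h ▸ E.perp_zero_one
  obtain ⟨hb1, ha1, _⟩ := E.rassoc hab h1
  have hb0 : b = E.zero := E.zero_one b hb1
  subst hb0
  rw [E.add_zero] at h
  exact ⟨h, rfl⟩

theorem le_refl (a : α) : E.le a a := ⟨E.zero, E.perp_zero a, E.add_zero a⟩

theorem le_trans {a b c : α} (h1 : E.le a b) (h2 : E.le b c) : E.le a c := by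
  obtain ⟨u, hu, rfl⟩ := h1
  obtain ⟨v, hv, rfl⟩ := h2
  obtain ⟨huv, hauv, he⟩ := E.rassoc hu hv
  exact ⟨E.add u v, hauv, he.symm⟩

theorem le_antisymm {a b : α} (h1 : E.le a b) (h2 : E.le b a) : a = b := by
  obtain ⟨u, hu, rfl⟩ := h1
  obtain ⟨v, hv, hv2⟩ := h2
  obtain ⟨huv, hauv, he⟩ := E.rassoc hu hv
  have : E.add a (E.add u v) = E.add a E.zero := by
    rw [← he, hv2, E.add_zero]
  have huv0 := E.cancel hauv (E.perp_zero a) this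
  have := E.pos huv huv0
  rw [this.1, E.add_zero]

theorem le_one (a : α) : E.le a E.one := by
  obtain ⟨a', ha'⟩ := E.exists_orthosupp a
  exact ⟨a', ha'.1, ha'.2⟩

theorem lt_wf [Finite α] : WellFounded (fun a b : α => E.le a b ∧ a ≠ b) := by
  haveI : IsTrans α (fun a b : α => E.le a b ∧ a ≠ b) := by
    constructor
    rintro a b c ⟨h1, h1'⟩ ⟨h2, h2'⟩
    refine ⟨E.le_trans h1 h2, fun h => ?_⟩
    subst h
    exact h1' (E.le_antisymm h1 h2)
  haveI : IsIrrefl α (fun a b : α => E.le a b ∧ a ≠ b) := ⟨fun a h => h.2 rfl⟩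
  exact Finite.wellFounded_of_trans_of_irrefl _

/-- every nonzero element dominates an atom -/
theorem exists_atom_le [Finite α] {x : α} (hx : x ≠ E.zero) :
    ∃ q, E.IsAtom' q ∧ E.le q x := by
  induction x using (E.lt_wf).induction with
  | _ x ih =>
    by_cases hat : E.IsAtom' x
    · exact ⟨x, hat, E.le_refl x⟩
    · rw [IsAtom'] at hat
      push_neg at hat
      obtain ⟨y, hy, hy0, hyx⟩ := hat hx
      obtain ⟨q, hq, hqy⟩ := ih y ⟨hy, hyx⟩ hy0
      exact ⟨q, hq, E.le_trans hqy hy⟩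

end EffectAlgebra

end Aux
section Aux2

variable {α : Type*} {E : EffectAlgebra α}

/-- NSum is deterministic in `n`. -/
theorem NSum.det {a : α} : ∀ {n s t}, NSum E a n s → NSum E a n t → s = t := by
  intro n s t hs ht
  induction hs generalizing t with
  | zero => cases ht; rfl
  | succ hs hperp ih =>
    cases ht with
    | succ ht hperp' => rw [ih ht]

/-- prefix sums exist -/
theorem NSum.prefix {a : α} : ∀ {n s}, NSum E a n s → ∀ m ≤ n, ∃ t, NSum E a m t := by
  intro n s hs
  induction hs with
  | zero => intro m hm; rw [Nat.le_zero.mp hm]; exact ⟨_, NSum.zero⟩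
  | @succ n s hs hperp ih =>
    intro m hm
    rcases Nat.lt_or_ge m (n + 1) with h | h
    · exact ih m (Nat.lt_succ_iff.mp h)
    · rw [Nat.le_antisymm hm h]; exact ⟨_, NSum.succ hs hperp⟩

/-- injectivity of k ↦ kp for p ≠ 0 -/
theorem NSum.inj {p : α} (hp0 : p ≠ E.zero) :
    ∀ {m n x y}, NSum E p m x → NSum E p n y → x = y → m = n := by
  intro m n x y hm
  induction hm generalizing n y with
  | zero =>
    intro hn heq
    cases hn with
    | zero => rfl
    | succ ht hperp =>
      exact absurd ((E.pos hperp heq.symm).2) hp0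
  | @succ m s hs hperp ih =>
    intro hn heq
    cases hn with
    | zero =>
      exact absurd ((E.pos hperp heq).2) hp0
    | @succ k t ht hperp' =>
      have hst : s = t := by
        apply E.cancel (E.perp_comm _ _ hperp) (E.perp_comm _ _ hperp')
        rw [← E.add_comm _ _ hperp, ← E.add_comm _ _ hperp']
        exact heq
      rw [ih ht hst]

/-- every element is a multiple of the unique atom -/
theorem nsum_exists [Finite α] {p : α} (hp : E.IsAtom' p)
    (huniq : ∀ q, E.IsAtom' q → q = p) (x : α) : ∃ k, NSum E p k x := by
  induction x using (E.lt_wf).induction with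
  | _ x ih =>
    by_cases hx : x = E.zero
    · exact ⟨0, hx ▸ NSum.zero⟩
    · obtain ⟨q, hq, hqx⟩ := E.exists_atom_le hx
      rw [huniq q hq] at hqx
      obtain ⟨c, hpc, hcx⟩ := hqx
      have hcp := E.perp_comm _ _ hpc
      have hcx' : E.add c p = x := by rw [← E.add_comm _ _ hpc]; exact hcx
      have hcltx : E.le c x ∧ c ≠ x := by
        refine ⟨⟨p, hcp, hcx'⟩, fun h => ?_⟩
        subst h
        refine hp.1 (E.cancel hcp (E.perp_zero c) ?_)
        rw [hcx', E.add_zero]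
      obtain ⟨k, hk⟩ := ih c hcltx
      exact ⟨k + 1, hcx' ▸ NSum.succ hk hcp⟩

end Aux2
/-- a finite effect algebra with a unique atom `p` is the chain
`{0, p, 2p, …, ord(p)·p = 1}`: there is `N` (the isotropic index of `p`) with
`Np = 1`, `(N+1)p` undefined, and every element equal to `kp` for a unique `k ≤ N`. -/
theorem finite_unique_atom_chain {α : Type*} [Finite α] (E : EffectAlgebra α)
    (p : α) (hp : E.IsAtom' p) (huniq : ∀ q, E.IsAtom' q → q = p) :
    ∃ N : ℕ, NSum E p N E.one ∧ (¬ ∃ s, NSum E p (N + 1) s) ∧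
      ∀ x : α, ∃! k : ℕ, k ≤ N ∧ NSum E p k x := by
  have hp0 := hp.1
  obtain ⟨N, hN⟩ := nsum_exists hp huniq E.one
  have hnot : ¬ ∃ s, NSum E p (N + 1) s := by
    rintro ⟨s, hs⟩
    cases hs with
    | @succ n t ht hperp =>
      have ht1 : t = E.one := NSum.det ht hN
      subst ht1
      exact hp0 (E.zero_one p (E.perp_comm _ _ hperp))
  refine ⟨N, hN, hnot, fun x => ?_⟩
  obtain ⟨k, hk⟩ := nsum_exists hp huniq x
  have hkN : k ≤ N := by
    by_contra h
    push_neg at h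
    exact hnot (hk.prefix (N + 1) h)
  exact ⟨k, ⟨hkN, hk⟩, fun j hj => NSum.inj hp0 hj.2 hk rfl⟩
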